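/- Let m ≥ 1, r > 0, t₀ ∈ ℝ, I = [t₀ - r, t₀ + r], and let f : I → ℝ be of class C^{m+1}. Suppose that for each j = 2, …, m+1 either f^{(j)} ≥ 0 on I or f^{(j)} ≤ 0 on I. Then |f^{(m)}(t₀)| ≤ 2^{(m+2)(m+1)/2 - 2} · (sup_{t ∈ I} |f(t)|) / r^m. -/

import Mathlib

/-!
If `g` has derivative `g'` and `g'` is monotone on `[c - ρ, c + ρ]`, then
the mean value theorem on `[c, c + ρ]` and on `[c - ρ, c]` traps `g' c` between two slopes of `g`,
so `|g' c| ≤ 2 sup |g| / ρ`. Applying this to `f^{(n-1)}`, whose derivative `f^{(n)}` is monotone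
or antitone because `f^{(n+1)}` has constant sign, and bounding `f^{(n-1)}` on `[c - ρ/2, c + ρ/2]` by induction
with half the radius, costs a factor `2^{n+1}` at step `n ≥ 2` (and `2` at step `1`); these
factors multiply to `2^{(m+2)(m+1)/2 - 2}`.
-/

open Set Topology

theorem abs_le_two_mul_div_of_monotoneOn {g g' : ℝ → ℝ} {c ρ K : ℝ} (hρ : 0 < ρ)
    (hg : ContinuousOn g (Icc (c - ρ) (c + ρ)))
    (hg' : ∀ x ∈ Ioo (c - ρ) (c + ρ), HasDerivAt g (g' x) x)
    (hmono : MonotoneOn g' (Ioo (c - ρ) (c + ρ)))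
    (hK : ∀ x ∈ Icc (c - ρ) (c + ρ), |g x| ≤ K) :
    |g' c| ≤ 2 * K / ρ := by
  have hc : c ∈ Ioo (c - ρ) (c + ρ) := ⟨by linarith, by linarith⟩
  have hosc : ∀ x ∈ Icc (c - ρ) (c + ρ), ∀ y ∈ Icc (c - ρ) (c + ρ), g y - g x ≤ 2 * K :=
    fun x hx y hy => by linarith [(abs_le.1 (hK x hx)).1, (abs_le.1 (hK y hy)).2]
  obtain ⟨ξ, hξ, hξ_slope⟩ := exists_hasDerivAt_eq_slope g g' (show c < c + ρ by linarith)
    (hg.mono (Icc_subset_Icc (by linarith) le_rfl))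
    (fun x hx => hg' x ⟨by linarith [hx.1], hx.2⟩)
  obtain ⟨η, hη, hη_slope⟩ := exists_hasDerivAt_eq_slope g g' (show c - ρ < c by linarith)
    (hg.mono (Icc_subset_Icc le_rfl (by linarith)))
    (fun x hx => hg' x ⟨hx.1, by linarith [hx.2]⟩)
  have hcI : c ∈ Icc (c - ρ) (c + ρ) := Ioo_subset_Icc_self hc
  rw [add_sub_cancel_left] at hξ_slope
  rw [sub_sub_cancel] at hη_slope
  refine abs_le.2 ⟨?_, ?_⟩
  · calc -(2 * K / ρ) ≤ (g c - g (c - ρ)) / ρ := by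
          rw [← neg_div]
          gcongr
          linarith [hosc c hcI (c - ρ) (left_mem_Icc.2 (by linarith))]
      _ = g' η := hη_slope.symm
      _ ≤ g' c := hmono ⟨hη.1, by linarith [hη.2]⟩ hc hη.2.le
  · calc g' c ≤ g' ξ := hmono hc ⟨by linarith [hξ.1], hξ.2⟩ hξ.1.le
      _ = (g (c + ρ) - g c) / ρ := hξ_slope
      _ ≤ 2 * K / ρ := by
          gcongr
          exact hosc c hcI (c + ρ) (right_mem_Icc.2 (by linarith))

theorem abs_le_two_mul_div_of_monotoneOn_or_antitoneOn {g g' : ℝ → ℝ} {c ρ K : ℝ} (hρ : 0 < ρ)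
    (hg : ContinuousOn g (Icc (c - ρ) (c + ρ)))
    (hg' : ∀ x ∈ Ioo (c - ρ) (c + ρ), HasDerivAt g (g' x) x)
    (hmono : MonotoneOn g' (Ioo (c - ρ) (c + ρ)) ∨ AntitoneOn g' (Ioo (c - ρ) (c + ρ)))
    (hK : ∀ x ∈ Icc (c - ρ) (c + ρ), |g x| ≤ K) :
    |g' c| ≤ 2 * K / ρ := by
  rcases hmono with hmono | hanti
  · exact abs_le_two_mul_div_of_monotoneOn hρ hg hg' hmono hK
  · simpa using abs_le_two_mul_div_of_monotoneOn (g := -g) (g' := -g') hρ hg.neg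
      (fun x hx => (hg' x hx).neg) hanti.neg (fun x hx => by simpa using hK x hx)

theorem gromov_exponent_succ {n : ℕ} (hn : 1 ≤ n) :
    (n + 1 + 2) * (n + 1 + 1) / 2 - 2 = (n + 2) * (n + 1) / 2 - 2 + (n + 2) := by
  have h6 : 6 ≤ (n + 2) * (n + 1) := by nlinarith
  have hstep : (n + 1 + 2) * (n + 1 + 1) = (n + 2) * (n + 1) + 2 * (n + 2) := by ring
  omega

theorem abs_apply_le_of_hasDerivAt_chain {s : Set ℝ} {g : ℕ → ℝ → ℝ} {m : ℕ} {M : ℝ}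
    (hcont : ∀ n < m, ContinuousOn (g n) s)
    (hderiv : ∀ n < m, ∀ x ∈ interior s, HasDerivAt (g n) (g (n + 1) x) x)
    (hmono : ∀ n, 1 ≤ n → n ≤ m → MonotoneOn (g n) s ∨ AntitoneOn (g n) s)
    (hM : ∀ x ∈ s, |g 0 x| ≤ M) {n : ℕ} (hn : 1 ≤ n) (hnm : n ≤ m) {c ρ : ℝ} (hρ : 0 < ρ)
    (hsub : Icc (c - ρ) (c + ρ) ⊆ s) :
    |g n c| ≤ 2 ^ ((n + 2) * (n + 1) / 2 - 2) * M / ρ ^ n := by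
  have step : ∀ n, n < m → ∀ {c ρ K : ℝ}, 0 < ρ → Icc (c - ρ) (c + ρ) ⊆ s →
      (∀ x ∈ Icc (c - ρ) (c + ρ), |g n x| ≤ K) → |g (n + 1) c| ≤ 2 * K / ρ :=
    fun n hn c ρ K hρ hsub hK =>
      abs_le_two_mul_div_of_monotoneOn_or_antitoneOn hρ ((hcont n hn).mono hsub)
        (fun x hx => hderiv n hn x (interior_maximal (Ioo_subset_Icc_self.trans hsub) isOpen_Ioo hx))
        ((hmono (n + 1) (by omega) hn).imp (·.mono (Ioo_subset_Icc_self.trans hsub))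
          (·.mono (Ioo_subset_Icc_self.trans hsub)))
        hK
  induction n, hn using Nat.le_induction generalizing c ρ with
  | base => simpa using step 0 (by omega) hρ hsub fun x hx => hM x (hsub hx)
  | succ n hn ih =>
    have hρ2 : 0 < ρ / 2 := by linarith
    have hhalf : ∀ x ∈ Icc (c - ρ / 2) (c + ρ / 2), Icc (x - ρ / 2) (x + ρ / 2) ⊆ s :=
      fun x hx => (Icc_subset_Icc (by linarith [hx.1]) (by linarith [hx.2])).trans hsub
    calc |g (n + 1) c|
        ≤ 2 * (2 ^ ((n + 2) * (n + 1) / 2 - 2) * M / (ρ / 2) ^ n) / (ρ / 2) :=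
          step n (by omega) hρ2 (hhalf c ⟨by linarith, by linarith⟩)
            fun x hx => ih (by omega) hρ2 (hhalf x hx)
      _ = 2 ^ ((n + 1 + 2) * (n + 1 + 1) / 2 - 2) * M / ρ ^ (n + 1) := by
          rw [gromov_exponent_succ hn, pow_add, div_pow]
          field_simp
          ring

theorem ContDiffOn.hasDerivAt_iteratedDerivWithin {𝕜 F : Type*} [NontriviallyNormedField 𝕜]
    [NormedAddCommGroup F] [NormedSpace 𝕜 F] {f : 𝕜 → F} {s : Set 𝕜} {N : WithTop ℕ∞} {n : ℕ}
    {x : 𝕜} (hf : ContDiffOn 𝕜 N f s) (hs : UniqueDiffOn 𝕜 s) (hn : n < N) (hx : s ∈ 𝓝 x) :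
    HasDerivAt (iteratedDerivWithin n f s) (iteratedDerivWithin (n + 1) f s x) x := by
  rw [iteratedDerivWithin_succ]
  exact ((hf.differentiableOn_iteratedDerivWithin hn hs) x
    (mem_of_mem_nhds hx)).hasDerivWithinAt.hasDerivAt hx

theorem monotoneOn_or_antitoneOn_of_hasDerivAt {D : Set ℝ} {f f' : ℝ → ℝ} (hD : Convex ℝ D)
    (hf : ContinuousOn f D) (hf' : ∀ x ∈ interior D, HasDerivAt f (f' x) x)
    (hsign : (∀ x ∈ interior D, 0 ≤ f' x) ∨ (∀ x ∈ interior D, f' x ≤ 0)) :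
    MonotoneOn f D ∨ AntitoneOn f D :=
  hsign.imp
    (monotoneOn_of_hasDerivWithinAt_nonneg hD hf fun x hx => (hf' x hx).hasDerivWithinAt)
    (antitoneOn_of_hasDerivWithinAt_nonpos hD hf fun x hx => (hf' x hx).hasDerivWithinAt)

/-- Gromov's inequality: if `f` is `C^{m+1}` on `I = [t₀ - r, t₀ + r]` and each derivative
`f^{(j)}`, `2 ≤ j ≤ m+1`, has constant sign on `I`, then
`|f^{(m)} t₀| ≤ 2^{(m+2)(m+1)/2 - 2} * (sup_I |f|) / r^m`. -/
theorem gromov_inequality (m : ℕ) (hm : 1 ≤ m)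
    (t₀ r : ℝ) (hr : 0 < r) (I : Set ℝ) (hI : I = Set.Icc (t₀ - r) (t₀ + r))
    (f : ℝ → ℝ) (hf : ContDiffOn ℝ (m + 1) f I)
    (hsign : ∀ j : ℕ, 2 ≤ j → j ≤ m + 1 →
      (∀ x ∈ I, 0 ≤ iteratedDerivWithin j f I x) ∨
      (∀ x ∈ I, iteratedDerivWithin j f I x ≤ 0))
    (M : ℝ) (hM : ∀ t ∈ I, |f t| ≤ M) :
    |iteratedDerivWithin m f I t₀| ≤ 2 ^ ((m + 2) * (m + 1) / 2 - 2) * M / r ^ m := by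
  have hs : UniqueDiffOn ℝ I := hI ▸ uniqueDiffOn_Icc (by linarith)
  have hcont : ∀ n ≤ m, ContinuousOn (iteratedDerivWithin n f I) I := fun n hn =>
    hf.continuousOn_iteratedDerivWithin (by exact_mod_cast hn.trans (Nat.le_succ m)) hs
  have hderiv : ∀ n ≤ m, ∀ x ∈ interior I,
      HasDerivAt (iteratedDerivWithin n f I) (iteratedDerivWithin (n + 1) f I x) x :=
    fun n hn x hx => hf.hasDerivAt_iteratedDerivWithin hs (by exact_mod_cast Nat.lt_succ_of_le hn)
      (mem_interior_iff_mem_nhds.1 hx)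
  have hmono : ∀ n, 1 ≤ n → n ≤ m →
      MonotoneOn (iteratedDerivWithin n f I) I ∨ AntitoneOn (iteratedDerivWithin n f I) I :=
    fun n hn hnm => monotoneOn_or_antitoneOn_of_hasDerivAt (hI ▸ convex_Icc _ _) (hcont n hnm)
      (hderiv n hnm) ((hsign (n + 1) (by omega) (by omega)).imp
        (fun h x hx => h x (interior_subset hx)) (fun h x hx => h x (interior_subset hx)))
  exact abs_apply_le_of_hasDerivAt_chain (fun n hn => hcont n hn.le) (fun n hn => hderiv n hn.le)
    hmono (by simpa using hM) hm le_rfl hr hI.ge
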